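/- Fix i with 1 ≤ i ≤ 4. Let v = s_1 ∘ s_2 ∘ s_3 ∘ s_2 ∘ s_4 ∘ s_3 ∘ s_1 ∘ s_2 (rightmost factor applied first), let u be an element of the subgroup of the orthogonal group of ℝ^4 generated by {s_j : j ≠ 1} with u(α_j) a negative root for every j ≠ 1, and let u_i be an element of the subgroup generated by {s_j : j ∉ {1, i}} with u_i(α_j) a negative root for every j ∉ {1, i} (u and u_i are the longest elements of the corresponding parabolic Weyl groups). Set w_i = u_i ∘ u ∘ v. Then w_i(α_3) is a positive root and is not a simple root. -/

import Mathlib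

open scoped InnerProductSpace

private lemma sRefl_invol {V : Type*} [NormedAddCommGroup V] [InnerProductSpace ℝ V]
    (b x : V) :
    (x - (2 * ⟪x, b⟫_ℝ / ⟪b, b⟫_ℝ) • b) -
      (2 * ⟪x - (2 * ⟪x, b⟫_ℝ / ⟪b, b⟫_ℝ) • b, b⟫_ℝ / ⟪b, b⟫_ℝ) • b = x := by
  by_cases hb : b = 0
  · simp [hb]
  · have h : ⟪b, b⟫_ℝ ≠ 0 := fun h => hb (inner_self_eq_zero.mp h)
    have key : 2 * ⟪x - (2 * ⟪x, b⟫_ℝ / ⟪b, b⟫_ℝ) • b, b⟫_ℝ / ⟪b, b⟫_ℝ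
        = -(2 * ⟪x, b⟫_ℝ / ⟪b, b⟫_ℝ) := by
      rw [inner_sub_left, real_inner_smul_left]
      field_simp
      ring
    rw [key, neg_smul, sub_neg_eq_add, sub_add_cancel]

/-- The reflection `s_b : x ↦ x - (2⟪x,b⟫/⟪b,b⟫) • b`, as a permutation of `V`. -/
noncomputable def sRefl {V : Type*} [NormedAddCommGroup V] [InnerProductSpace ℝ V]
    (b : V) : Equiv.Perm V where
  toFun x := x - (2 * ⟪x, b⟫_ℝ / ⟪b, b⟫_ℝ) • b
  invFun x := x - (2 * ⟪x, b⟫_ℝ / ⟪b, b⟫_ℝ) • b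
  left_inv x := sRefl_invol b x
  right_inv x := sRefl_invol b x

/-- `E n i` is the `i`-th standard basis vector of `ℝ^n` (for indices `1 ≤ i ≤ n`). -/
noncomputable def E (n i : ℕ) : EuclideanSpace ℝ (Fin n) :=
  if h : 1 ≤ i ∧ i ≤ n then EuclideanSpace.single (⟨i - 1, by omega⟩ : Fin n) 1 else 0

/-- The simple roots of type `F₄`: `α₁ = e₂ - e₃`, `α₂ = e₃ - e₄`, `α₃ = e₄`,
`α₄ = (e₁ - e₂ - e₃ - e₄)/2`. -/
noncomputable def alphaF : ℕ → EuclideanSpace ℝ (Fin 4)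
  | 1 => E 4 2 - E 4 3
  | 2 => E 4 3 - E 4 4
  | 3 => E 4 4
  | 4 => (1 / 2 : ℝ) • (E 4 1 - E 4 2 - E 4 3 - E 4 4)
  | _ => 0

/-- The roots of type `F₄`: `±eᵢ`, `±eᵢ ± eⱼ` (`i < j`) and `(±e₁ ± e₂ ± e₃ ± e₄)/2`. -/
def RootF : Set (EuclideanSpace ℝ (Fin 4)) :=
  {x | (∃ i, 1 ≤ i ∧ i ≤ 4 ∧ (x = E 4 i ∨ x = -E 4 i)) ∨
    (∃ i j, 1 ≤ i ∧ i < j ∧ j ≤ 4 ∧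
      (x = E 4 i + E 4 j ∨ x = -(E 4 i + E 4 j) ∨ x = E 4 i - E 4 j ∨ x = E 4 j - E 4 i)) ∨
    (∃ ε : ℕ → ℝ, (∀ i, ε i = 1 ∨ ε i = -1) ∧
      x = (1 / 2 : ℝ) • (ε 1 • E 4 1 + ε 2 • E 4 2 + ε 3 • E 4 3 + ε 4 • E 4 4))}

/-- A positive root of type `F₄`: a root which is a nonnegative integer combination of
the simple roots. -/
def IsPosF (x : EuclideanSpace ℝ (Fin 4)) : Prop :=
  x ∈ RootF ∧ ∃ c : ℕ → ℕ, x = ∑ i ∈ Finset.Icc 1 4, (c i : ℝ) • alphaF i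

/-- A negative root of type `F₄`: the negative of a positive root. -/
def IsNegF (x : EuclideanSpace ℝ (Fin 4)) : Prop :=
  IsPosF (-x)

/-- The simple reflections `sᵢ = s_{αᵢ}` of type `F₄`. -/
noncomputable def sF (i : ℕ) : Equiv.Perm (EuclideanSpace ℝ (Fin 4)) :=
  sRefl (alphaF i)

/-- The highest root `α₀ = e₁ + e₂ = 2α₁ + 3α₂ + 4α₃ + 2α₄` of type `F₄`. -/
noncomputable def alpha0F : EuclideanSpace ℝ (Fin 4) :=
  E 4 1 + E 4 2

/-- `v = s₁ ∘ s₂ ∘ s₃ ∘ s₂ ∘ s₄ ∘ s₃ ∘ s₁ ∘ s₂` (rightmost factor applied first);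
recall that in `Equiv.Perm` the product `f * g` is the composition `f ∘ g`. -/
noncomputable def vF : Equiv.Perm (EuclideanSpace ℝ (Fin 4)) :=
  sF 1 * sF 2 * sF 3 * sF 2 * sF 4 * sF 3 * sF 1 * sF 2

noncomputable def V4 (a b c d : ℝ) : EuclideanSpace ℝ (Fin 4) :=
  (WithLp.equiv 2 (Fin 4 → ℝ)).symm ![a, b, c, d]

lemma V4_add (a b c d a' b' c' d' : ℝ) :
    V4 a b c d + V4 a' b' c' d' = V4 (a+a') (b+b') (c+c') (d+d') := by
  ext i; fin_cases i <;> simp [V4]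

lemma V4_smul (r a b c d : ℝ) : r • V4 a b c d = V4 (r*a) (r*b) (r*c) (r*d) := by
  ext i; fin_cases i <;> simp [V4]

lemma V4_sub (a b c d a' b' c' d' : ℝ) :
    V4 a b c d - V4 a' b' c' d' = V4 (a-a') (b-b') (c-c') (d-d') := by
  ext i; fin_cases i <;> simp [V4]

lemma V4_neg (a b c d : ℝ) : -V4 a b c d = V4 (-a) (-b) (-c) (-d) := by
  ext i; fin_cases i <;> simp [V4]

lemma V4_inner (a b c d a' b' c' d' : ℝ) :
    ⟪V4 a b c d, V4 a' b' c' d'⟫_ℝ = a*a' + b*b' + c*c' + d*d' := by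
  simp [V4, PiLp.inner_apply, RCLike.inner_apply, Fin.sum_univ_four]; ring

lemma V4_eq_iff (a b c d a' b' c' d' : ℝ) :
    V4 a b c d = V4 a' b' c' d' ↔ (a = a' ∧ b = b' ∧ c = c' ∧ d = d') := by
  constructor
  · intro h
    have h0 := congrArg (fun v : EuclideanSpace ℝ (Fin 4) => v 0) h
    have h1 := congrArg (fun v : EuclideanSpace ℝ (Fin 4) => v 1) h
    have h2 := congrArg (fun v : EuclideanSpace ℝ (Fin 4) => v 2) h
    have h3 := congrArg (fun v : EuclideanSpace ℝ (Fin 4) => v 3) h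
    simp [V4] at h0 h1 h2 h3
    exact ⟨h0, h1, h2, h3⟩
  · rintro ⟨rfl, rfl, rfl, rfl⟩; rfl

lemma E1_eq : E 4 1 = V4 1 0 0 0 := by
  ext i; fin_cases i <;> simp [E, V4, EuclideanSpace.single_apply] <;> norm_num [Fin.ext_iff]

lemma E2_eq : E 4 2 = V4 0 1 0 0 := by
  ext i; fin_cases i <;> simp [E, V4, EuclideanSpace.single_apply] <;> norm_num [Fin.ext_iff]

lemma E3_eq : E 4 3 = V4 0 0 1 0 := by
  ext i; fin_cases i <;> simp [E, V4, EuclideanSpace.single_apply] <;> norm_num [Fin.ext_iff]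

lemma E4_eq : E 4 4 = V4 0 0 0 1 := by
  ext i; fin_cases i <;> simp [E, V4, EuclideanSpace.single_apply] <;> norm_num [Fin.ext_iff]

lemma al1_eq : alphaF 1 = V4 0 1 (-1) 0 := by
  rw [show alphaF 1 = E 4 2 - E 4 3 from rfl, E2_eq, E3_eq, V4_sub]; norm_num

lemma al2_eq : alphaF 2 = V4 0 0 1 (-1) := by
  rw [show alphaF 2 = E 4 3 - E 4 4 from rfl, E3_eq, E4_eq, V4_sub]; norm_num

lemma al3_eq : alphaF 3 = V4 0 0 0 1 := by
  rw [show alphaF 3 = E 4 4 from rfl, E4_eq]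

lemma al4_eq : alphaF 4 = V4 (1/2) (-(1/2)) (-(1/2)) (-(1/2)) := by
  rw [show alphaF 4 = (1/2 : ℝ) • (E 4 1 - E 4 2 - E 4 3 - E 4 4) from rfl,
    E1_eq, E2_eq, E3_eq, E4_eq, V4_sub, V4_sub, V4_sub, V4_smul]
  norm_num

lemma sRefl_apply {V : Type*} [NormedAddCommGroup V] [InnerProductSpace ℝ V] (b x : V) :
    sRefl b x = x - (2 * ⟪x, b⟫_ℝ / ⟪b, b⟫_ℝ) • b := rfl

lemma sF1_apply (a b c d : ℝ) : sF 1 (V4 a b c d) = V4 a c b d := by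
  rw [sF, sRefl_apply, al1_eq, V4_inner, V4_inner, V4_smul, V4_sub]
  rw [V4_eq_iff]; refine ⟨by ring, by ring, by ring, by ring⟩

lemma sF2_apply (a b c d : ℝ) : sF 2 (V4 a b c d) = V4 a b d c := by
  rw [sF, sRefl_apply, al2_eq, V4_inner, V4_inner, V4_smul, V4_sub]
  rw [V4_eq_iff]; refine ⟨by ring, by ring, by ring, by ring⟩

lemma sF3_apply (a b c d : ℝ) : sF 3 (V4 a b c d) = V4 a b c (-d) := by
  rw [sF, sRefl_apply, al3_eq, V4_inner, V4_inner, V4_smul, V4_sub]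
  rw [V4_eq_iff]; refine ⟨by ring, by ring, by ring, by ring⟩

lemma sF4_apply (a b c d : ℝ) : sF 4 (V4 a b c d) =
    V4 ((a+b+c+d)/2) ((a+b-c-d)/2) ((a-b+c-d)/2) ((a-b-c+d)/2) := by
  rw [sF, sRefl_apply, al4_eq, V4_inner, V4_inner, V4_smul, V4_sub]
  rw [V4_eq_iff]; refine ⟨by ring, by ring, by ring, by ring⟩

lemma vF_al3 : vF (alphaF 3) = V4 (1/2) (1/2) (1/2) (-(1/2)) := by
  rw [al3_eq, vF]
  simp only [Equiv.Perm.mul_apply]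
  rw [sF2_apply, sF1_apply, sF3_apply, sF4_apply, sF2_apply, sF3_apply, sF2_apply, sF1_apply]
  rw [V4_eq_iff]; norm_num

lemma sum_Icc14 (g : ℕ → EuclideanSpace ℝ (Fin 4)) :
    ∑ i ∈ Finset.Icc 1 4, g i = g 1 + g 2 + g 3 + g 4 := by
  have h : Finset.Icc 1 4 = ({1, 2, 3, 4} : Finset ℕ) := by decide
  rw [h]
  simp [Finset.sum_insert, Finset.mem_insert]
  abel

lemma pos_f {x : EuclideanSpace ℝ (Fin 4)} (h : IsPosF x) :
    0 ≤ ⟪x, V4 8 3 2 1⟫_ℝ := by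
  obtain ⟨-, c, hc⟩ := h
  rw [hc, sum_Icc14, al1_eq, al2_eq, al3_eq, al4_eq]
  rw [V4_smul, V4_smul, V4_smul, V4_smul, V4_add, V4_add, V4_add, V4_inner]
  have h1 := (c 1).cast_nonneg (α := ℝ)
  have h2 := (c 2).cast_nonneg (α := ℝ)
  have h3 := (c 3).cast_nonneg (α := ℝ)
  have h4 := (c 4).cast_nonneg (α := ℝ)
  nlinarith

lemma short_classify {x : EuclideanSpace ℝ (Fin 4)} (hx : x ∈ RootF)
    (hnorm : ⟪x, x⟫_ℝ = 1) (horth : ⟪x, V4 1 1 0 0⟫_ℝ = 0)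
    (hf : 0 ≤ ⟪x, V4 8 3 2 1⟫_ℝ) :
    x = V4 0 0 1 0 ∨ x = V4 0 0 0 1 ∨ x = V4 (1/2) (-(1/2)) (1/2) (1/2) ∨
    x = V4 (1/2) (-(1/2)) (1/2) (-(1/2)) ∨ x = V4 (1/2) (-(1/2)) (-(1/2)) (1/2) ∨
    x = V4 (1/2) (-(1/2)) (-(1/2)) (-(1/2)) := by
  rcases hx with ⟨i, hi1, hi2, hx | hx⟩ | ⟨i, j, hi1, hij, hj4, hx | hx | hx | hx⟩ |
    ⟨ε, hε, hx⟩
  · interval_cases i <;>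
      simp only [hx, E1_eq, E2_eq, E3_eq, E4_eq, V4_neg, V4_inner] at hnorm horth hf ⊢ <;>
      norm_num [V4_eq_iff] at *
  · interval_cases i <;>
      simp only [hx, E1_eq, E2_eq, E3_eq, E4_eq, V4_neg, V4_inner] at hnorm horth hf ⊢ <;>
      norm_num [V4_eq_iff] at *
  · have hj1 : 1 ≤ j := by omega
    interval_cases j <;> interval_cases i <;>
      simp only [hx, E1_eq, E2_eq, E3_eq, E4_eq, V4_add, V4_sub, V4_neg, V4_inner]
        at hnorm horth hf ⊢ <;>
      norm_num [V4_eq_iff] at *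
  · have hj1 : 1 ≤ j := by omega
    interval_cases j <;> interval_cases i <;>
      simp only [hx, E1_eq, E2_eq, E3_eq, E4_eq, V4_add, V4_sub, V4_neg, V4_inner]
        at hnorm horth hf ⊢ <;>
      norm_num [V4_eq_iff] at *
  · have hj1 : 1 ≤ j := by omega
    interval_cases j <;> interval_cases i <;>
      simp only [hx, E1_eq, E2_eq, E3_eq, E4_eq, V4_add, V4_sub, V4_neg, V4_inner]
        at hnorm horth hf ⊢ <;>
      norm_num [V4_eq_iff] at *
  · have hj1 : 1 ≤ j := by omega
    interval_cases j <;> interval_cases i <;>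
      simp only [hx, E1_eq, E2_eq, E3_eq, E4_eq, V4_add, V4_sub, V4_neg, V4_inner]
        at hnorm horth hf ⊢ <;>
      norm_num [V4_eq_iff] at *
  · rcases hε 1 with h1 | h1 <;> rcases hε 2 with h2 | h2 <;> rcases hε 3 with h3 | h3 <;>
      rcases hε 4 with h4 | h4 <;> rw [h1, h2, h3, h4] at hx <;>
      simp only [hx, E1_eq, E2_eq, E3_eq, E4_eq, V4_smul, V4_add, V4_inner]
        at hnorm horth hf ⊢ <;>
      norm_num [V4_eq_iff] at *

lemma long_classify {x : EuclideanSpace ℝ (Fin 4)} (hx : x ∈ RootF)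
    (hnorm : ⟪x, x⟫_ℝ = 2) (horth : ⟪x, V4 1 1 0 0⟫_ℝ = 0)
    (hf : 0 ≤ ⟪x, V4 8 3 2 1⟫_ℝ) :
    x = V4 1 (-1) 0 0 ∨ x = V4 0 0 1 1 ∨ x = V4 0 0 1 (-1) := by
  rcases hx with ⟨i, hi1, hi2, hx | hx⟩ | ⟨i, j, hi1, hij, hj4, hx | hx | hx | hx⟩ |
    ⟨ε, hε, hx⟩
  · interval_cases i <;>
      simp only [hx, E1_eq, E2_eq, E3_eq, E4_eq, V4_neg, V4_inner] at hnorm horth hf ⊢ <;>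
      norm_num [V4_eq_iff] at *
  · interval_cases i <;>
      simp only [hx, E1_eq, E2_eq, E3_eq, E4_eq, V4_neg, V4_inner] at hnorm horth hf ⊢ <;>
      norm_num [V4_eq_iff] at *
  · have hj1 : 1 ≤ j := by omega
    interval_cases j <;> interval_cases i <;>
      simp only [hx, E1_eq, E2_eq, E3_eq, E4_eq, V4_add, V4_sub, V4_neg, V4_inner]
        at hnorm horth hf ⊢ <;>
      norm_num [V4_eq_iff] at *
  · have hj1 : 1 ≤ j := by omega
    interval_cases j <;> interval_cases i <;>
      simp only [hx, E1_eq, E2_eq, E3_eq, E4_eq, V4_add, V4_sub, V4_neg, V4_inner]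
        at hnorm horth hf ⊢ <;>
      norm_num [V4_eq_iff] at *
  · have hj1 : 1 ≤ j := by omega
    interval_cases j <;> interval_cases i <;>
      simp only [hx, E1_eq, E2_eq, E3_eq, E4_eq, V4_add, V4_sub, V4_neg, V4_inner]
        at hnorm horth hf ⊢ <;>
      norm_num [V4_eq_iff] at *
  · have hj1 : 1 ≤ j := by omega
    interval_cases j <;> interval_cases i <;>
      simp only [hx, E1_eq, E2_eq, E3_eq, E4_eq, V4_add, V4_sub, V4_neg, V4_inner]
        at hnorm horth hf ⊢ <;>
      norm_num [V4_eq_iff] at *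
  · rcases hε 1 with h1 | h1 <;> rcases hε 2 with h2 | h2 <;> rcases hε 3 with h3 | h3 <;>
      rcases hε 4 with h4 | h4 <;> rw [h1, h2, h3, h4] at hx <;>
      simp only [hx, E1_eq, E2_eq, E3_eq, E4_eq, V4_smul, V4_add, V4_inner]
        at hnorm horth hf ⊢ <;>
      norm_num [V4_eq_iff] at *

section Closure

variable {V : Type*} [NormedAddCommGroup V] [InnerProductSpace ℝ V]

lemma sRefl_add (b x y : V) : sRefl b (x + y) = sRefl b x + sRefl b y := by
  simp only [sRefl_apply, inner_add_left]
  have h : 2 * (⟪x, b⟫_ℝ + ⟪y, b⟫_ℝ) / ⟪b, b⟫_ℝ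
      = 2 * ⟪x, b⟫_ℝ / ⟪b, b⟫_ℝ + 2 * ⟪y, b⟫_ℝ / ⟪b, b⟫_ℝ := by ring
  rw [h, add_smul]
  abel

lemma sRefl_smul (b : V) (r : ℝ) (x : V) : sRefl b (r • x) = r • sRefl b x := by
  simp only [sRefl_apply, real_inner_smul_left]
  have h : 2 * (r * ⟪x, b⟫_ℝ) / ⟪b, b⟫_ℝ = r * (2 * ⟪x, b⟫_ℝ / ⟪b, b⟫_ℝ) := by ring
  rw [h, smul_sub, smul_smul]

lemma sRefl_inner (b x y : V) : ⟪sRefl b x, sRefl b y⟫_ℝ = ⟪x, y⟫_ℝ := by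
  by_cases hb : b = 0
  · simp [sRefl_apply, hb]
  · have h : ⟪b, b⟫_ℝ ≠ 0 := fun h => hb (inner_self_eq_zero.mp h)
    simp only [sRefl_apply, inner_sub_left, inner_sub_right, real_inner_smul_left,
      real_inner_smul_right, real_inner_comm b y]
    field_simp
    ring

lemma sRefl_fix (b z : V) (h : ⟪z, b⟫_ℝ = 0) : sRefl b z = z := by
  simp [sRefl_apply, h]

lemma sRefl_inv (b : V) : (sRefl b)⁻¹ = sRefl b := by
  rfl

/-- Key closure-induction lemma: any element of the subgroup generated by reflections
in vectors from `T` is additive, homogeneous, inner-preserving, and fixes every vector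
orthogonal to all of `T`. -/
lemma closure_good (S : Set (Equiv.Perm V)) (T : Set V)
    (hST : ∀ g ∈ S, ∃ b ∈ T, g = sRefl b) (u : Equiv.Perm V)
    (hu : u ∈ Subgroup.closure S) :
    (∀ x y, u (x + y) = u x + u y) ∧ (∀ (r : ℝ) x, u (r • x) = r • u x) ∧
    (∀ x y, ⟪u x, u y⟫_ℝ = ⟪x, y⟫_ℝ) ∧
    (∀ z, (∀ b ∈ T, ⟪z, b⟫_ℝ = 0) → u z = z) := by
  have hu' : u ∈ Submonoid.closure (S ∪ S⁻¹) := by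
    rw [← Subgroup.closure_toSubmonoid] at *
    exact hu
  clear hu
  induction hu' using Submonoid.closure_induction with
  | one => exact ⟨fun x y => rfl, fun r x => rfl, fun x y => rfl, fun z _ => rfl⟩
  | mul a b _ _ ha hb =>
      obtain ⟨ha1, ha2, ha3, ha4⟩ := ha
      obtain ⟨hb1, hb2, hb3, hb4⟩ := hb
      refine ⟨fun x y => ?_, fun r x => ?_, fun x y => ?_, fun z hz => ?_⟩
      · simp [Equiv.Perm.mul_apply, hb1, ha1]
      · simp [Equiv.Perm.mul_apply, hb2, ha2]
      · simp [Equiv.Perm.mul_apply, ha3, hb3]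
      · simp [Equiv.Perm.mul_apply, hb4 z hz, ha4 z hz]
  | mem g hg =>
      have hg' : ∃ b ∈ T, g = sRefl b := by
        rcases hg with hg | hg
        · exact hST g hg
        · obtain ⟨b, hb, hgb⟩ := hST g⁻¹ hg
          exact ⟨b, hb, by rw [← sRefl_inv, ← hgb, inv_inv]⟩
      obtain ⟨b, hb, rfl⟩ := hg'
      exact ⟨sRefl_add b, sRefl_smul b, sRefl_inner b,
        fun z hz => sRefl_fix b z (hz b hb)⟩

end Closure

set_option maxHeartbeats 2000000 in
lemma uB3 (u : Equiv.Perm (EuclideanSpace ℝ (Fin 4)))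
    (hinner : ∀ x y, ⟪u x, u y⟫_ℝ = ⟪x, y⟫_ℝ)
    (hfix : u (V4 1 1 0 0) = V4 1 1 0 0)
    (hneg : ∀ j, 1 ≤ j → j ≤ 4 → j ≠ 1 → IsNegF (u (alphaF j))) :
    u (alphaF 2) = -V4 0 0 1 (-1) ∧ u (alphaF 3) = -V4 0 0 0 1 ∧
    u (alphaF 4) = -V4 (1/2) (-(1/2)) (-(1/2)) (-(1/2)) := by
  have hb2 : IsPosF (-u (alphaF 2)) := hneg 2 (by norm_num) (by norm_num) (by norm_num)
  have hb3 : IsPosF (-u (alphaF 3)) := hneg 3 (by norm_num) (by norm_num) (by norm_num)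
  have hb4 : IsPosF (-u (alphaF 4)) := hneg 4 (by norm_num) (by norm_num) (by norm_num)
  have hn2 : ⟪-u (alphaF 2), -u (alphaF 2)⟫_ℝ = 2 := by
    rw [inner_neg_neg, hinner, al2_eq, V4_inner]; norm_num
  have hn3 : ⟪-u (alphaF 3), -u (alphaF 3)⟫_ℝ = 1 := by
    rw [inner_neg_neg, hinner, al3_eq, V4_inner]; norm_num
  have hn4 : ⟪-u (alphaF 4), -u (alphaF 4)⟫_ℝ = 1 := by
    rw [inner_neg_neg, hinner, al4_eq, V4_inner]; norm_num
  have ho2 : ⟪-u (alphaF 2), V4 1 1 0 0⟫_ℝ = 0 := by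
    rw [inner_neg_left, ← hfix, hinner, al2_eq, V4_inner]; norm_num
  have ho3 : ⟪-u (alphaF 3), V4 1 1 0 0⟫_ℝ = 0 := by
    rw [inner_neg_left, ← hfix, hinner, al3_eq, V4_inner]; norm_num
  have ho4 : ⟪-u (alphaF 4), V4 1 1 0 0⟫_ℝ = 0 := by
    rw [inner_neg_left, ← hfix, hinner, al4_eq, V4_inner]; norm_num
  have c23 : ⟪u (alphaF 2), u (alphaF 3)⟫_ℝ = -1 := by
    rw [hinner, al2_eq, al3_eq, V4_inner]; norm_num
  have c34 : ⟪u (alphaF 3), u (alphaF 4)⟫_ℝ = -(1/2) := by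
    rw [hinner, al3_eq, al4_eq, V4_inner]; norm_num
  have c24 : ⟪u (alphaF 2), u (alphaF 4)⟫_ℝ = 0 := by
    rw [hinner, al2_eq, al4_eq, V4_inner]; norm_num
  rcases long_classify hb2.1 hn2 ho2 (pos_f hb2) with h2 | h2 | h2 <;>
    rcases short_classify hb3.1 hn3 ho3 (pos_f hb3) with h3 | h3 | h3 | h3 | h3 | h3 <;>
    rcases short_classify hb4.1 hn4 ho4 (pos_f hb4) with h4 | h4 | h4 | h4 | h4 | h4 <;>
    rw [neg_eq_iff_eq_neg] at h2 h3 h4 <;>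
    rw [h2, h3] at c23 <;> rw [h3, h4] at c34 <;> rw [h2, h4] at c24 <;>
    rw [h2, h3, h4] <;>
    simp only [V4_neg, V4_inner, V4_eq_iff] at c23 c34 c24 ⊢ <;>
    (try norm_num at c23) <;> (try norm_num at c34) <;> (try norm_num at c24) <;> norm_num

lemma neg_fle {x : EuclideanSpace ℝ (Fin 4)} (h : IsNegF x) :
    ⟪x, V4 8 3 2 1⟫_ℝ ≤ 0 := by
  have h' := pos_f h
  rw [inner_neg_left] at h'
  linarith

/-- The `i = 3` parabolic `{2, 4}`. -/
lemma uA1A1 (u : Equiv.Perm (EuclideanSpace ℝ (Fin 4)))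
    (hinner : ∀ x y, ⟪u x, u y⟫_ℝ = ⟪x, y⟫_ℝ)
    (hfix : u (V4 1 1 0 0) = V4 1 1 0 0)
    (hfixm : u (V4 1 (-1) 1 1) = V4 1 (-1) 1 1)
    (hneg2 : IsNegF (u (alphaF 2))) :
    u (alphaF 2) = -V4 0 0 1 (-1) := by
  have hn2 : ⟪-u (alphaF 2), -u (alphaF 2)⟫_ℝ = 2 := by
    rw [inner_neg_neg, hinner, al2_eq, V4_inner]; norm_num
  have ho2 : ⟪-u (alphaF 2), V4 1 1 0 0⟫_ℝ = 0 := by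
    rw [inner_neg_left, ← hfix, hinner, al2_eq, V4_inner]; norm_num
  have hm2 : ⟪-u (alphaF 2), V4 1 (-1) 1 1⟫_ℝ = 0 := by
    rw [inner_neg_left, ← hfixm, hinner, al2_eq, V4_inner]; norm_num
  rcases long_classify hneg2.1 hn2 ho2 (pos_f hneg2) with h2 | h2 | h2 <;>
    rw [neg_eq_iff_eq_neg] at h2 <;> rw [h2] at hm2 ⊢ <;>
    simp only [V4_neg, V4_inner, V4_eq_iff] at hm2 ⊢ <;> (try norm_num at hm2) <;> norm_num

/-- The `i = 4` parabolic `{2, 3}`. -/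
lemma uB2 (u : Equiv.Perm (EuclideanSpace ℝ (Fin 4)))
    (hinner : ∀ x y, ⟪u x, u y⟫_ℝ = ⟪x, y⟫_ℝ)
    (hfix1 : u (V4 1 0 0 0) = V4 1 0 0 0)
    (hfix2 : u (V4 0 1 0 0) = V4 0 1 0 0)
    (hneg2 : IsNegF (u (alphaF 2))) (hneg3 : IsNegF (u (alphaF 3))) :
    u (alphaF 2) = -V4 0 0 1 (-1) := by
  have hn2 : ⟪-u (alphaF 2), -u (alphaF 2)⟫_ℝ = 2 := by
    rw [inner_neg_neg, hinner, al2_eq, V4_inner]; norm_num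
  have hn3 : ⟪-u (alphaF 3), -u (alphaF 3)⟫_ℝ = 1 := by
    rw [inner_neg_neg, hinner, al3_eq, V4_inner]; norm_num
  have he12 : V4 1 1 0 0 = V4 1 0 0 0 + V4 0 1 0 0 := by rw [V4_add]; norm_num
  have hm2a : ⟪-u (alphaF 2), V4 1 0 0 0⟫_ℝ = 0 := by
    rw [inner_neg_left, ← hfix1, hinner, al2_eq, V4_inner]; norm_num
  have hm2b : ⟪-u (alphaF 2), V4 0 1 0 0⟫_ℝ = 0 := by
    rw [inner_neg_left, ← hfix2, hinner, al2_eq, V4_inner]; norm_num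
  have ho2 : ⟪-u (alphaF 2), V4 1 1 0 0⟫_ℝ = 0 := by
    rw [he12, inner_add_right, hm2a, hm2b]; norm_num
  have hm3a : ⟪-u (alphaF 3), V4 1 0 0 0⟫_ℝ = 0 := by
    rw [inner_neg_left, ← hfix1, hinner, al3_eq, V4_inner]; norm_num
  have hm3b : ⟪-u (alphaF 3), V4 0 1 0 0⟫_ℝ = 0 := by
    rw [inner_neg_left, ← hfix2, hinner, al3_eq, V4_inner]; norm_num
  have ho3 : ⟪-u (alphaF 3), V4 1 1 0 0⟫_ℝ = 0 := by
    rw [he12, inner_add_right, hm3a, hm3b]; norm_num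
  have c23 : ⟪u (alphaF 2), u (alphaF 3)⟫_ℝ = -1 := by
    rw [hinner, al2_eq, al3_eq, V4_inner]; norm_num
  rcases long_classify hneg2.1 hn2 ho2 (pos_f hneg2) with h2 | h2 | h2 <;>
    rcases short_classify hneg3.1 hn3 ho3 (pos_f hneg3) with h3 | h3 | h3 | h3 | h3 | h3 <;>
    rw [neg_eq_iff_eq_neg] at h2 h3 <;>
    rw [h2] at hm2a ⊢ <;> rw [h3] at hm3a <;> rw [h2, h3] at c23 <;>
    simp only [V4_neg, V4_inner, V4_eq_iff] at hm2a hm3a c23 ⊢ <;>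
    (try norm_num at hm2a) <;> (try norm_num at hm3a) <;> (try norm_num at c23) <;> norm_num

/-- Pair-orbit predicate for the `A₂` subsystem `{α₃, α₄}`: the pair
`(g α₃, g α₄)` ranges over the 6 images of the simple pair under `W(A₂)`. -/
def PairA2 (g : Equiv.Perm (EuclideanSpace ℝ (Fin 4))) : Prop :=
  (g (alphaF 3) = alphaF 3 ∧ g (alphaF 4) = alphaF 4) ∨
  (g (alphaF 3) = -alphaF 3 ∧ g (alphaF 4) = alphaF 3 + alphaF 4) ∨
  (g (alphaF 3) = alphaF 3 + alphaF 4 ∧ g (alphaF 4) = -alphaF 4) ∨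
  (g (alphaF 3) = alphaF 4 ∧ g (alphaF 4) = -(alphaF 3 + alphaF 4)) ∨
  (g (alphaF 3) = -(alphaF 3 + alphaF 4) ∧ g (alphaF 4) = alphaF 3) ∨
  (g (alphaF 3) = -alphaF 4 ∧ g (alphaF 4) = -alphaF 3)

/-- The `i = 2` parabolic `{3, 4}` of type `A₂`. -/
lemma uA2 (u : Equiv.Perm (EuclideanSpace ℝ (Fin 4)))
    (hu : u ∈ Subgroup.closure {g | ∃ j, 1 ≤ j ∧ j ≤ 4 ∧ j ≠ 1 ∧ j ≠ 2 ∧ g = sF j})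
    (hneg3 : IsNegF (u (alphaF 3))) (hneg4 : IsNegF (u (alphaF 4))) :
    u (alphaF 3) = -alphaF 4 ∧ u (alphaF 4) = -alphaF 3 := by
  have key : (∀ x y, u (x + y) = u x + u y) ∧ (∀ (r : ℝ) x, u (r • x) = r • u x) ∧
      PairA2 u := by
    have hu' : u ∈ Submonoid.closure
        ({g | ∃ j, 1 ≤ j ∧ j ≤ 4 ∧ j ≠ 1 ∧ j ≠ 2 ∧ g = sF j} ∪
         {g | ∃ j, 1 ≤ j ∧ j ≤ 4 ∧ j ≠ 1 ∧ j ≠ 2 ∧ g = sF j}⁻¹) := by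
      rw [← Subgroup.closure_toSubmonoid] at *
      exact hu
    clear hu hneg3 hneg4
    induction hu' using Submonoid.closure_induction with
    | one => exact ⟨fun x y => rfl, fun r x => rfl, Or.inl ⟨rfl, rfl⟩⟩
    | mul a b _ _ ha hb =>
        obtain ⟨ha1, ha2, ha3⟩ := ha
        obtain ⟨hb1, hb2, hb3⟩ := hb
        have haneg : ∀ x, a (-x) = -a x := fun x => by
          rw [← neg_one_smul ℝ x, ha2, neg_one_smul]
        refine ⟨fun x y => by simp [Equiv.Perm.mul_apply, hb1, ha1],
          fun r x => by simp [Equiv.Perm.mul_apply, hb2, ha2], ?_⟩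
        rcases hb3 with ⟨h3, h4⟩ | ⟨h3, h4⟩ | ⟨h3, h4⟩ | ⟨h3, h4⟩ | ⟨h3, h4⟩ | ⟨h3, h4⟩ <;>
          rcases ha3 with ⟨g3, g4⟩ | ⟨g3, g4⟩ | ⟨g3, g4⟩ | ⟨g3, g4⟩ | ⟨g3, g4⟩ | ⟨g3, g4⟩ <;>
          simp only [PairA2, Equiv.Perm.mul_apply, h3, h4, haneg, ha1, g3, g4] <;>
          simp only [al3_eq, al4_eq, V4_add, V4_neg, V4_eq_iff] <;>
          norm_num
    | mem g hg =>
        have hg' : ∃ j, (j = 3 ∨ j = 4) ∧ g = sF j := by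
          rcases hg with ⟨j, hj1, hj2, hj3, hj4, hgj⟩ | ⟨j, hj1, hj2, hj3, hj4, hgj⟩
          · exact ⟨j, by omega, hgj⟩
          · refine ⟨j, by omega, ?_⟩
            have hgg : g = (sF j)⁻¹ := by rw [← hgj, inv_inv]
            rw [hgg]
            exact sRefl_inv (alphaF j)
        obtain ⟨j, hj, rfl⟩ := hg'
        rcases hj with rfl | rfl
        · refine ⟨sRefl_add _, sRefl_smul _, Or.inr (Or.inl ⟨?_, ?_⟩)⟩
          · rw [al3_eq, sF3_apply, V4_neg]; norm_num
          · rw [al4_eq, al3_eq, sF3_apply, V4_add]; norm_num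
        · refine ⟨sRefl_add _, sRefl_smul _, Or.inr (Or.inr (Or.inl ⟨?_, ?_⟩))⟩
          · rw [al3_eq, al4_eq, sF4_apply, V4_add]; norm_num
          · rw [al4_eq, sF4_apply, V4_neg]; norm_num
  obtain ⟨-, -, hp⟩ := key
  have f3 := neg_fle hneg3
  have f4 := neg_fle hneg4
  rcases hp with ⟨h3, h4⟩ | ⟨h3, h4⟩ | ⟨h3, h4⟩ | ⟨h3, h4⟩ | ⟨h3, h4⟩ | ⟨h3, h4⟩ <;>
    rw [h3] at f3 <;> rw [h4] at f4 <;>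
    simp only [al3_eq, al4_eq, V4_add, V4_neg, V4_inner] at f3 f4 <;>
    first
      | (exact ⟨h3, h4⟩)
      | ((try norm_num at f3) <;> norm_num at f4)

lemma isPos_F1 : IsPosF (V4 (1/2) (1/2) (1/2) (-(1/2))) := by
  constructor
  · refine Or.inr (Or.inr ⟨fun n => if n = 4 then -1 else 1,
      fun i => by by_cases h : i = 4 <;> simp [h], ?_⟩)
    norm_num
    simp only [E1_eq, E2_eq, E3_eq, E4_eq, V4_smul, V4_add, V4_neg, V4_eq_iff]
    norm_num
  · refine ⟨fun j => if j = 1 then 1 else if j = 2 then 2 else if j = 3 then 2 else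
      if j = 4 then 1 else 0, ?_⟩
    rw [sum_Icc14]
    norm_num
    simp only [al1_eq, al2_eq, al3_eq, al4_eq, V4_smul, V4_add, V4_eq_iff]
    norm_num

lemma F1_ne : ∀ j, 1 ≤ j → j ≤ 4 → V4 (1/2) (1/2) (1/2) (-(1/2)) ≠ alphaF j := by
  intro j h1 h4
  interval_cases j <;>
    simp only [ne_eq, al1_eq, al2_eq, al3_eq, al4_eq, V4_eq_iff] <;> norm_num

lemma isPos_e2 : IsPosF (V4 0 1 0 0) := by
  constructor
  · exact Or.inl ⟨2, by norm_num, by norm_num, Or.inl E2_eq.symm⟩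
  · refine ⟨fun j => if j = 1 then 1 else if j = 2 then 1 else if j = 3 then 1 else 0, ?_⟩
    rw [sum_Icc14]
    norm_num
    simp only [al1_eq, al2_eq, al3_eq, al4_eq, V4_smul, V4_add, V4_eq_iff]
    norm_num

lemma e2_ne : ∀ j, 1 ≤ j → j ≤ 4 → V4 0 1 0 0 ≠ alphaF j := by
  intro j h1 h4
  interval_cases j <;>
    simp only [ne_eq, al1_eq, al2_eq, al3_eq, al4_eq, V4_eq_iff] <;> norm_num

/-- Type `F₄`, `1 ≤ i ≤ 4`: let `v = s₁ ∘ s₂ ∘ s₃ ∘ s₂ ∘ s₄ ∘ s₃ ∘ s₁ ∘ s₂`, let `u` be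
the longest element of the parabolic Weyl group generated by `{sⱼ : j ≠ 1}` and let `u'` be
the longest element of the parabolic Weyl group generated by `{sⱼ : j ∉ {1, i}}`.  Then
`wᵢ = u' ∘ u ∘ v` sends `α₃` to a positive root which is not simple. -/
theorem stmt_17 (i : ℕ) (hi1 : 1 ≤ i) (hi2 : i ≤ 4)
    (u : Equiv.Perm (EuclideanSpace ℝ (Fin 4)))
    (hu : u ∈ Subgroup.closure {g | ∃ j, 1 ≤ j ∧ j ≤ 4 ∧ j ≠ 1 ∧ g = sF j})
    (hneg : ∀ j, 1 ≤ j → j ≤ 4 → j ≠ 1 → IsNegF (u (alphaF j)))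
    (u' : Equiv.Perm (EuclideanSpace ℝ (Fin 4)))
    (hu' : u' ∈ Subgroup.closure {g | ∃ j, 1 ≤ j ∧ j ≤ 4 ∧ j ≠ 1 ∧ j ≠ i ∧ g = sF j})
    (hneg' : ∀ j, 1 ≤ j → j ≤ 4 → j ≠ 1 → j ≠ i → IsNegF (u' (alphaF j))) :
    IsPosF ((u' * u * vF) (alphaF 3)) ∧
    ∀ j, 1 ≤ j → j ≤ 4 → (u' * u * vF) (alphaF 3) ≠ alphaF j := by
  -- Step 1: `u` is the longest element of the `B₃` parabolic: it acts as `-1` on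
  -- the span of `α₂, α₃, α₄` and fixes `α₀ = e₁ + e₂`.
  have hSu : ∀ g ∈ {g | ∃ j, 1 ≤ j ∧ j ≤ 4 ∧ j ≠ 1 ∧ g = sF j},
      ∃ b ∈ ({alphaF 2, alphaF 3, alphaF 4} : Set (EuclideanSpace ℝ (Fin 4))),
        g = sRefl b := by
    rintro g ⟨j, hj1, hj2, hj3, rfl⟩
    interval_cases j
    · exact absurd rfl hj3
    · exact ⟨alphaF 2, by simp, rfl⟩
    · exact ⟨alphaF 3, by simp, rfl⟩
    · exact ⟨alphaF 4, by simp, rfl⟩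
  obtain ⟨huadd, husmul, huinner, hufixT⟩ := closure_good _ _ hSu u hu
  have hufix0 : u (V4 1 1 0 0) = V4 1 1 0 0 := by
    refine hufixT _ ?_
    rintro b hb
    simp only [Set.mem_insert_iff, Set.mem_singleton_iff] at hb
    rcases hb with rfl | rfl | rfl <;>
      simp only [al2_eq, al3_eq, al4_eq, V4_inner] <;> norm_num
  obtain ⟨hu2, -, -⟩ := uB3 u huinner hufix0 hneg
  -- Step 2: compute `u (v α₃)`.
  have hvdec : vF (alphaF 3) = (1/2 : ℝ) • V4 1 1 0 0 + (1/2 : ℝ) • alphaF 2 := by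
    rw [vF_al3]
    simp only [al2_eq, V4_smul, V4_add, V4_eq_iff]
    norm_num
  have hZ : u (vF (alphaF 3)) = V4 (1/2) (1/2) (-(1/2)) (1/2) := by
    rw [hvdec, huadd, husmul, husmul, hufix0, hu2]
    simp only [V4_neg, V4_smul, V4_add, V4_eq_iff]
    norm_num
  have hmul : (u' * u * vF) (alphaF 3) = u' (u (vF (alphaF 3))) := rfl
  -- Step 3: case analysis on `i`.
  interval_cases i
  · -- i = 1
    have hSu' : ∀ g ∈ {g | ∃ j, 1 ≤ j ∧ j ≤ 4 ∧ j ≠ 1 ∧ j ≠ 1 ∧ g = sF j},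
        ∃ b ∈ ({alphaF 2, alphaF 3, alphaF 4} : Set (EuclideanSpace ℝ (Fin 4))),
          g = sRefl b := by
      rintro g ⟨j, hj1, hj2, hj3, hj4, rfl⟩
      interval_cases j
      · exact absurd rfl hj3
      · exact ⟨alphaF 2, by simp, rfl⟩
      · exact ⟨alphaF 3, by simp, rfl⟩
      · exact ⟨alphaF 4, by simp, rfl⟩
    obtain ⟨hadd', hsmul', hinner', hfixT'⟩ := closure_good _ _ hSu' u' hu'
    have hfix0' : u' (V4 1 1 0 0) = V4 1 1 0 0 := by
      refine hfixT' _ ?_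
      rintro b hb
      simp only [Set.mem_insert_iff, Set.mem_singleton_iff] at hb
      rcases hb with rfl | rfl | rfl <;>
        simp only [al2_eq, al3_eq, al4_eq, V4_inner] <;> norm_num
    obtain ⟨h2', -, -⟩ := uB3 u' hinner' hfix0' (fun j a b c => hneg' j a b c c)
    have hW : (u' * u * vF) (alphaF 3) = V4 (1/2) (1/2) (1/2) (-(1/2)) := by
      rw [hmul, hZ, show V4 (1/2) (1/2) (-(1/2)) (1/2) =
        (1/2 : ℝ) • V4 1 1 0 0 + (-(1/2) : ℝ) • alphaF 2 by
          simp only [al2_eq, V4_smul, V4_add, V4_eq_iff]; norm_num]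
      rw [hadd', hsmul', hsmul', hfix0', h2']
      simp only [V4_neg, V4_smul, V4_add, V4_eq_iff]
      norm_num
    rw [hW]
    exact ⟨isPos_F1, F1_ne⟩
  · -- i = 2
    have hSu' : ∀ g ∈ {g | ∃ j, 1 ≤ j ∧ j ≤ 4 ∧ j ≠ 1 ∧ j ≠ 2 ∧ g = sF j},
        ∃ b ∈ ({alphaF 3, alphaF 4} : Set (EuclideanSpace ℝ (Fin 4))),
          g = sRefl b := by
      rintro g ⟨j, hj1, hj2, hj3, hj4, rfl⟩
      interval_cases j
      · exact absurd rfl hj3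
      · exact absurd rfl hj4
      · exact ⟨alphaF 3, by simp, rfl⟩
      · exact ⟨alphaF 4, by simp, rfl⟩
    obtain ⟨hadd', hsmul', hinner', hfixT'⟩ := closure_good _ _ hSu' u' hu'
    have hfix0' : u' (V4 1 1 0 0) = V4 1 1 0 0 := by
      refine hfixT' _ ?_
      rintro b hb
      simp only [Set.mem_insert_iff, Set.mem_singleton_iff] at hb
      rcases hb with rfl | rfl <;>
        simp only [al3_eq, al4_eq, V4_inner] <;> norm_num
    have hfixm' : u' (V4 1 0 1 0) = V4 1 0 1 0 := by
      refine hfixT' _ ?_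
      rintro b hb
      simp only [Set.mem_insert_iff, Set.mem_singleton_iff] at hb
      rcases hb with rfl | rfl <;>
        simp only [al3_eq, al4_eq, V4_inner] <;> norm_num
    obtain ⟨h3', h4'⟩ := uA2 u' hu'
      (hneg' 3 (by norm_num) (by norm_num) (by norm_num) (by norm_num))
      (hneg' 4 (by norm_num) (by norm_num) (by norm_num) (by norm_num))
    have hW : (u' * u * vF) (alphaF 3) = V4 0 1 0 0 := by
      rw [hmul, hZ, show V4 (1/2) (1/2) (-(1/2)) (1/2) =
        (2/3 : ℝ) • V4 1 1 0 0 + (-(1/3) : ℝ) • V4 1 0 1 0 + (2/3 : ℝ) • alphaF 3 +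
          (1/3 : ℝ) • alphaF 4 by
          simp only [al3_eq, al4_eq, V4_smul, V4_add, V4_eq_iff]; norm_num]
      rw [hadd', hadd', hadd', hsmul', hsmul', hsmul', hsmul', hfix0', hfixm', h3', h4']
      simp only [al3_eq, al4_eq, V4_neg, V4_smul, V4_add, V4_eq_iff]
      norm_num
    rw [hW]
    exact ⟨isPos_e2, e2_ne⟩
  · -- i = 3
    have hSu' : ∀ g ∈ {g | ∃ j, 1 ≤ j ∧ j ≤ 4 ∧ j ≠ 1 ∧ j ≠ 3 ∧ g = sF j},
        ∃ b ∈ ({alphaF 2, alphaF 4} : Set (EuclideanSpace ℝ (Fin 4))),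
          g = sRefl b := by
      rintro g ⟨j, hj1, hj2, hj3, hj4, rfl⟩
      interval_cases j
      · exact absurd rfl hj3
      · exact ⟨alphaF 2, by simp, rfl⟩
      · exact absurd rfl hj4
      · exact ⟨alphaF 4, by simp, rfl⟩
    obtain ⟨hadd', hsmul', hinner', hfixT'⟩ := closure_good _ _ hSu' u' hu'
    have hfix0' : u' (V4 1 1 0 0) = V4 1 1 0 0 := by
      refine hfixT' _ ?_
      rintro b hb
      simp only [Set.mem_insert_iff, Set.mem_singleton_iff] at hb
      rcases hb with rfl | rfl <;>
        simp only [al2_eq, al4_eq, V4_inner] <;> norm_num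
    have hfixm' : u' (V4 1 (-1) 1 1) = V4 1 (-1) 1 1 := by
      refine hfixT' _ ?_
      rintro b hb
      simp only [Set.mem_insert_iff, Set.mem_singleton_iff] at hb
      rcases hb with rfl | rfl <;>
        simp only [al2_eq, al4_eq, V4_inner] <;> norm_num
    have h2' := uA1A1 u' hinner' hfix0' hfixm'
      (hneg' 2 (by norm_num) (by norm_num) (by norm_num) (by norm_num))
    have hW : (u' * u * vF) (alphaF 3) = V4 (1/2) (1/2) (1/2) (-(1/2)) := by
      rw [hmul, hZ, show V4 (1/2) (1/2) (-(1/2)) (1/2) =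
        (1/2 : ℝ) • V4 1 1 0 0 + (-(1/2) : ℝ) • alphaF 2 by
          simp only [al2_eq, V4_smul, V4_add, V4_eq_iff]; norm_num]
      rw [hadd', hsmul', hsmul', hfix0', h2']
      simp only [V4_neg, V4_smul, V4_add, V4_eq_iff]
      norm_num
    rw [hW]
    exact ⟨isPos_F1, F1_ne⟩
  · -- i = 4
    have hSu' : ∀ g ∈ {g | ∃ j, 1 ≤ j ∧ j ≤ 4 ∧ j ≠ 1 ∧ j ≠ 4 ∧ g = sF j},
        ∃ b ∈ ({alphaF 2, alphaF 3} : Set (EuclideanSpace ℝ (Fin 4))),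
          g = sRefl b := by
      rintro g ⟨j, hj1, hj2, hj3, hj4, rfl⟩
      interval_cases j
      · exact absurd rfl hj3
      · exact ⟨alphaF 2, by simp, rfl⟩
      · exact ⟨alphaF 3, by simp, rfl⟩
      · exact absurd rfl hj4
    obtain ⟨hadd', hsmul', hinner', hfixT'⟩ := closure_good _ _ hSu' u' hu'
    have hfixe1 : u' (V4 1 0 0 0) = V4 1 0 0 0 := by
      refine hfixT' _ ?_
      rintro b hb
      simp only [Set.mem_insert_iff, Set.mem_singleton_iff] at hb
      rcases hb with rfl | rfl <;>
        simp only [al2_eq, al3_eq, V4_inner] <;> norm_num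
    have hfixe2 : u' (V4 0 1 0 0) = V4 0 1 0 0 := by
      refine hfixT' _ ?_
      rintro b hb
      simp only [Set.mem_insert_iff, Set.mem_singleton_iff] at hb
      rcases hb with rfl | rfl <;>
        simp only [al2_eq, al3_eq, V4_inner] <;> norm_num
    have h2' := uB2 u' hinner' hfixe1 hfixe2
      (hneg' 2 (by norm_num) (by norm_num) (by norm_num) (by norm_num))
      (hneg' 3 (by norm_num) (by norm_num) (by norm_num) (by norm_num))
    have hW : (u' * u * vF) (alphaF 3) = V4 (1/2) (1/2) (1/2) (-(1/2)) := by
      rw [hmul, hZ, show V4 (1/2) (1/2) (-(1/2)) (1/2) =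
        (1/2 : ℝ) • V4 1 0 0 0 + (1/2 : ℝ) • V4 0 1 0 0 + (-(1/2) : ℝ) • alphaF 2 by
          simp only [al2_eq, V4_smul, V4_add, V4_eq_iff]; norm_num]
      rw [hadd', hadd', hsmul', hsmul', hsmul', hfixe1, hfixe2, h2']
      simp only [V4_neg, V4_smul, V4_add, V4_eq_iff]
      norm_num
    rw [hW]
    exact ⟨isPos_F1, F1_ne⟩
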